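/- If Z = R·P where R ~ Gamma(L, 1) and P ~ Gamma(k, k/γ̄_I) are independent, then Z has density f(z) = 2 (k/γ̄_I)^((L+k)/2) z^((L+k)/2 - 1) K_{L-k}(2√(k z/γ̄_I)) / (Γ(L) Γ(k)) for z > 0. -/

import Mathlib

open MeasureTheory Set ProbabilityTheory

/-- Modified Bessel function of the second kind, via its integral representation. -/
noncomputable def besselK (ν x : ℝ) : ℝ :=
  ∫ t in Ioi (0:ℝ), Real.exp (-x * Real.cosh t) * Real.cosh (ν * t)

/-- The density of the sum of `L` fully correlated squared-K interferers with shape `k`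
and mean parameter `γ̄_I`. -/
noncomputable def fcDensity (L k γbar x : ℝ) : ℝ :=
  2 * (k / γbar) ^ ((L + k) / 2) * x ^ ((L + k) / 2 - 1) / (Real.Gamma L * Real.Gamma k) *
    besselK (L - k) (2 * Real.sqrt (k * x / γbar))

open scoped ENNReal


lemma lintegral_image_eq_abs_deriv_mul {s : Set ℝ} {f f' : ℝ → ℝ}
    (hs : MeasurableSet s) (hf' : ∀ x ∈ s, HasDerivWithinAt f (f' x) s x)
    (hf : InjOn f s) (g : ℝ → ℝ≥0∞) :
    ∫⁻ x in f '' s, g x = ∫⁻ x in s, ENNReal.ofReal |f' x| * g (f x) := by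
  simpa only [ContinuousLinearMap.det_toSpanSingleton] using
    lintegral_image_eq_lintegral_abs_det_fderiv_mul volume hs
      (fun x hx => (hf' x hx).hasFDerivWithinAt) hf g

lemma lintegral_Ioi_comp_exp (g : ℝ → ℝ≥0∞) :
    ∫⁻ x in Ioi (0:ℝ), g x = ∫⁻ t : ℝ, ENNReal.ofReal (Real.exp t) * g (Real.exp t) := by
  have h := lintegral_image_eq_abs_deriv_mul (s := univ) (f := Real.exp) (f' := Real.exp)
    MeasurableSet.univ (fun x _ => (Real.hasDerivAt_exp x).hasDerivWithinAt)
    Real.exp_injective.injOn g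
  rw [image_univ, Real.range_exp, setLIntegral_univ] at h
  simpa [abs_of_pos (Real.exp_pos _)] using h

lemma lintegral_Iio_neg (g : ℝ → ℝ≥0∞) :
    ∫⁻ x in Iio (0:ℝ), g x = ∫⁻ x in Ioi (0:ℝ), g (-x) := by
  have h := lintegral_image_eq_abs_deriv_mul (s := Ioi (0:ℝ)) (f := fun x => -x)
    (f' := fun _ => (-1:ℝ)) measurableSet_Ioi
    (fun x _ => (hasDerivAt_neg x).hasDerivWithinAt) (neg_injective.injOn) g
  have him : (fun x => -x) '' Ioi (0:ℝ) = Iio 0 := by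
    ext x
    constructor
    · rintro ⟨y, hy, rfl⟩; simpa using hy
    · intro hx; exact ⟨-x, by simpa using hx, by ring⟩
  rw [him] at h
  simpa using h


lemma besselK_integrand_nonneg (ν x t : ℝ) :
    0 ≤ Real.exp (-x * Real.cosh t) * Real.cosh (ν * t) :=
  mul_nonneg (Real.exp_pos _).le (Real.cosh_pos _).le

lemma besselK_integrand_bound {ν x : ℝ} (hx : 0 < x) {t : ℝ} (ht : 0 ≤ t) :
    Real.exp (-x * Real.cosh t) * Real.cosh (ν * t)
      ≤ Real.exp ((|ν| + 1) ^ 2 / x) * Real.exp (-t) := by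
  have h1 : Real.cosh (ν * t) ≤ Real.exp (|ν| * t) := by
    rw [Real.cosh_eq]
    have h2 : ν * t ≤ |ν| * t := mul_le_mul_of_nonneg_right (le_abs_self ν) ht
    have h3 : -(ν * t) ≤ |ν| * t := by
      have := mul_le_mul_of_nonneg_right (neg_le_abs ν) ht
      linarith [this]
    nlinarith [Real.exp_le_exp.2 h2, Real.exp_le_exp.2 h3]
  have h4 : Real.exp t / 2 ≤ Real.cosh t := by
    rw [Real.cosh_eq]; nlinarith [Real.exp_pos (-t)]
  have h5 : Real.exp (-x * Real.cosh t) ≤ Real.exp (-x * (Real.exp t / 2)) := by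
    apply Real.exp_le_exp.2; nlinarith
  calc Real.exp (-x * Real.cosh t) * Real.cosh (ν * t)
      ≤ Real.exp (-x * (Real.exp t / 2)) * Real.exp (|ν| * t) := by
        apply mul_le_mul h5 h1 (Real.cosh_pos _).le (Real.exp_pos _).le
    _ = Real.exp (|ν| * t - x * Real.exp t / 2) := by rw [← Real.exp_add]; ring_nf
    _ ≤ Real.exp ((|ν| + 1) ^ 2 / x) * Real.exp (-t) := by
        rw [← Real.exp_add]
        apply Real.exp_le_exp.2
        have hq : t ^ 2 / 2 ≤ Real.exp t := by
          nlinarith [Real.quadratic_le_exp_of_nonneg ht]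
        rw [div_add' _ _ _ hx.ne', le_div_iff₀ hx]
        nlinarith [sq_nonneg (|ν| + 1 - x * t / 2), mul_le_mul_of_nonneg_left hq hx.le,
          abs_nonneg ν, mul_nonneg hx.le ht]

lemma besselK_integrable (ν : ℝ) {x : ℝ} (hx : 0 < x) :
    IntegrableOn (fun t => Real.exp (-x * Real.cosh t) * Real.cosh (ν * t)) (Ioi 0) := by
  have hg : IntegrableOn (fun t => Real.exp ((|ν| + 1) ^ 2 / x) * Real.exp (-(1:ℝ) * t)) (Ioi 0) :=
    (exp_neg_integrableOn_Ioi 0 one_pos).const_mul _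
  apply Integrable.mono hg
  · exact ((Real.continuous_exp.comp (continuous_const.mul Real.continuous_cosh)).mul
      (Real.continuous_cosh.comp (continuous_const.mul continuous_id))).aestronglyMeasurable.restrict
  · filter_upwards [ae_restrict_mem measurableSet_Ioi] with t ht
    rw [Real.norm_eq_abs, Real.norm_eq_abs, abs_of_nonneg (besselK_integrand_nonneg ν x t),
      abs_of_nonneg (mul_nonneg (Real.exp_pos _).le (Real.exp_pos _).le)]
    simpa using besselK_integrand_bound hx (le_of_lt ht)

lemma ofReal_besselK {ν x : ℝ} (hx : 0 < x) :
    ENNReal.ofReal (besselK ν x)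
      = ∫⁻ t in Ioi (0:ℝ), ENNReal.ofReal (Real.exp (-x * Real.cosh t) * Real.cosh (ν * t)) :=
  ofReal_integral_eq_lintegral_ofReal (besselK_integrable ν hx)
    (Filter.Eventually.of_forall fun t => besselK_integrand_nonneg ν x t)

lemma key_integral {b : ℝ} (μ : ℝ) (hb : 0 < b) :
    ∫⁻ r in Ioi (0:ℝ), ENNReal.ofReal (r ^ (μ - 1) * Real.exp (-r - b / r))
      = ENNReal.ofReal (2 * b ^ (μ / 2) * besselK μ (2 * Real.sqrt b)) := by
  have hsb : 0 < Real.sqrt b := Real.sqrt_pos.2 hb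
  set c := Real.log (Real.sqrt b) with hc
  -- step 1: substitute r = exp t
  rw [lintegral_Ioi_comp_exp]
  -- step 2: simplify integrand
  have step2 : ∀ t : ℝ, ENNReal.ofReal (Real.exp t)
      * ENNReal.ofReal (Real.exp t ^ (μ - 1) * Real.exp (-Real.exp t - b / Real.exp t))
      = ENNReal.ofReal (Real.exp (μ * t - Real.exp t - b * Real.exp (-t))) := by
    intro t
    rw [← ENNReal.ofReal_mul (Real.exp_pos t).le]
    congr 1
    rw [Real.rpow_def_of_pos (Real.exp_pos t), Real.log_exp, ← Real.exp_add, ← Real.exp_add,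
      Real.exp_neg, div_eq_mul_inv]
    congr 1
    ring
  simp_rw [step2]
  -- step 3: translate t ↦ t + c
  rw [← lintegral_add_right_eq_self
    (fun t => ENNReal.ofReal (Real.exp (μ * t - Real.exp t - b * Real.exp (-t)))) c]
  -- step 4: simplify translated integrand
  have step4 : ∀ t : ℝ, ENNReal.ofReal
        (Real.exp (μ * (t + c) - Real.exp (t + c) - b * Real.exp (-(t + c))))
      = ENNReal.ofReal (b ^ (μ / 2))
        * ENNReal.ofReal (Real.exp (μ * t - 2 * Real.sqrt b * Real.cosh t)) := by
    intro t
    rw [← ENNReal.ofReal_mul (Real.rpow_nonneg hb.le _)]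
    congr 1
    have e1 : Real.exp (t + c) = Real.exp t * Real.sqrt b := by
      rw [Real.exp_add, hc, Real.exp_log hsb]
    have e2 : b * Real.exp (-(t + c)) = Real.sqrt b * Real.exp (-t) := by
      rw [neg_add, Real.exp_add, Real.exp_neg c, hc, Real.exp_log hsb]
      field_simp
      rw [Real.sq_sqrt hb.le]
    rw [e1, e2, Real.rpow_def_of_pos hb, ← Real.exp_add]
    congr 1
    rw [Real.cosh_eq]
    have e3 : c = Real.log b / 2 := by rw [hc, Real.log_sqrt hb.le]
    rw [e3]
    ring
  simp_rw [step4]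
  -- step 5: pull out constant
  rw [lintegral_const_mul' _ _ ENNReal.ofReal_ne_top]
  -- step 6: split the line
  rw [← lintegral_add_compl
    (fun t => ENNReal.ofReal (Real.exp (μ * t - 2 * Real.sqrt b * Real.cosh t)))
    (measurableSet_Ioi (a := (0:ℝ))), compl_Ioi, ← restrict_Iio_eq_restrict_Iic,
    lintegral_Iio_neg]
  have step6 : ∀ t : ℝ, ENNReal.ofReal (Real.exp (μ * -t - 2 * Real.sqrt b * Real.cosh (-t)))
      = ENNReal.ofReal (Real.exp (-μ * t - 2 * Real.sqrt b * Real.cosh t)) := by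
    intro t; rw [Real.cosh_neg]; ring_nf
  simp_rw [step6]
  -- step 7: combine
  have hmeas : Measurable fun t : ℝ =>
      ENNReal.ofReal (Real.exp (μ * t - 2 * Real.sqrt b * Real.cosh t)) := by
    apply ENNReal.measurable_ofReal.comp
    exact (Real.measurable_exp.comp ((measurable_const.mul measurable_id).sub
      ((measurable_const.mul Real.continuous_cosh.measurable))))
  rw [← lintegral_add_left hmeas]
  have step7 : ∀ t : ℝ, ENNReal.ofReal (Real.exp (μ * t - 2 * Real.sqrt b * Real.cosh t))
      + ENNReal.ofReal (Real.exp (-μ * t - 2 * Real.sqrt b * Real.cosh t))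
      = ENNReal.ofReal 2 * ENNReal.ofReal
          (Real.exp (-(2 * Real.sqrt b) * Real.cosh t) * Real.cosh (μ * t)) := by
    intro t
    rw [← ENNReal.ofReal_add (Real.exp_pos _).le (Real.exp_pos _).le,
      ← ENNReal.ofReal_mul (by norm_num)]
    congr 1
    rw [neg_mul, Real.cosh_eq (μ * t), sub_eq_add_neg, sub_eq_add_neg, Real.exp_add,
      Real.exp_add, neg_mul]
    ring
  simp_rw [step7]
  rw [lintegral_const_mul' _ _ ENNReal.ofReal_ne_top, ← ofReal_besselK (by positivity)]
  rw [← ENNReal.ofReal_mul (by positivity), ← ENNReal.ofReal_mul (by positivity)]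
  congr 1
  ring

/-- If `R ~ Gamma(L, 1)` and `P ~ Gamma(k, k/γ̄_I)` are independent, then `Z = R·P`
has the fully-correlated interference density. -/
theorem product_gamma_gamma_has_fc_density
    {Ω : Type*} [MeasureSpace Ω] [IsProbabilityMeasure (ℙ : Measure Ω)]
    (R P : Ω → ℝ) (hRm : Measurable R) (hPm : Measurable P)
    (L k γbarI : ℝ) (hL : 0 < L) (hk : 0 < k) (hγ : 0 < γbarI)
    (hindep : IndepFun R P)
    (hR : Measure.map R ℙ = volume.withDensity (gammaPDF L 1))
    (hP : Measure.map P ℙ = volume.withDensity (gammaPDF k (k / γbarI))) :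
    Measure.map (fun ω => R ω * P ω) ℙ =
      volume.withDensity
        (fun z => ENNReal.ofReal (if 0 < z then fcDensity L k γbarI z else 0)) := by
  set c := k / γbarI with hcdef
  have hc : 0 < c := div_pos hk hγ
  set f : ℝ → ℝ≥0∞ := gammaPDF L 1 with hfdef
  set g : ℝ → ℝ≥0∞ := gammaPDF k c with hgdef
  have hfm : Measurable f := (measurable_gammaPDFReal L 1).ennreal_ofReal
  have hgm : Measurable g := (measurable_gammaPDFReal k c).ennreal_ofReal
  set D : ℝ → ℝ≥0∞ := fun z => ENNReal.ofReal (if 0 < z then fcDensity L k γbarI z else 0)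
    with hDdef
  -- joint law
  have hprod : Measure.map (fun ω => (R ω, P ω)) ℙ
      = (volume.withDensity f).prod (volume.withDensity g) := by
    rw [← hR, ← hP]
    exact (indepFun_iff_map_prod_eq_prod_map_map hRm.aemeasurable hPm.aemeasurable).1 hindep
  have hmul : Measurable fun p : ℝ × ℝ => p.1 * p.2 := measurable_fst.mul measurable_snd
  have hmap : Measure.map (fun ω => R ω * P ω) ℙ
      = Measure.map (fun p : ℝ × ℝ => p.1 * p.2)
          ((volume.withDensity f).prod (volume.withDensity g)) := by
    rw [← hprod, Measure.map_map hmul (hRm.prodMk hPm)]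
    rfl
  rw [hmap]
  ext s hs
  have hs' : MeasurableSet ((fun p : ℝ × ℝ => p.1 * p.2) ⁻¹' s) := hmul hs
  rw [Measure.map_apply hmul hs, Measure.prod_apply hs',
    lintegral_withDensity_eq_lintegral_mul volume hfm (measurable_measure_prodMk_left hs')]
  set G : ℝ → ℝ≥0∞ :=
    fun r => (volume.withDensity g) (Prod.mk r ⁻¹' ((fun p : ℝ × ℝ => p.1 * p.2) ⁻¹' s)) with hGdef
  -- restrict to positive r
  have hzero_ae : ∀ᵐ (r : ℝ) ∂volume, r ≠ 0 := by
    refine (ae_iff).2 ?_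
    have : {a : ℝ | ¬a ≠ 0} = {0} := by ext a; simp
    rw [this]
    exact Real.volume_singleton
  have hrestrict : ∫⁻ r, (f * G) r ∂volume = ∫⁻ r in Ioi (0:ℝ), (f * G) r ∂volume := by
    rw [← lintegral_add_compl ((f * G)) (measurableSet_Ioi (a := (0:ℝ)))]
    have : ∫⁻ r in (Ioi (0:ℝ))ᶜ, (f * G) r ∂volume = 0 := by
      rw [compl_Ioi]
      have h0 : ∀ᵐ (r : ℝ) ∂(volume.restrict (Iic (0:ℝ))), (f * G) r = 0 := by
        filter_upwards [ae_restrict_mem measurableSet_Iic, ae_restrict_of_ae hzero_ae] with r hr hne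
        have hrneg : r < 0 := lt_of_le_of_ne hr hne
        simp only [Pi.mul_apply, hfdef, gammaPDF_of_neg hrneg, zero_mul]
      rw [lintegral_congr_ae h0, lintegral_zero]
    rw [this, add_zero]
  rw [hrestrict]
  -- change of variables in the inner integral, for r > 0
  have hinner : ∀ r : ℝ, 0 < r →
      G r = (ENNReal.ofReal r)⁻¹ * ∫⁻ z, s.indicator (fun z => g (z / r)) z ∂volume := by
    intro r hr
    have hTr : Prod.mk r ⁻¹' ((fun p : ℝ × ℝ => p.1 * p.2) ⁻¹' s)
        = (fun p : ℝ => r * p) ⁻¹' s := rfl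
    have hsetm : MeasurableSet ((fun p : ℝ => r * p) ⁻¹' s) := (measurable_const_mul r) hs
    have himg : (fun p : ℝ => r * p) '' univ = univ :=
      image_univ.trans (mul_left_surjective₀ hr.ne').range_eq
    have hcv := lintegral_image_eq_abs_deriv_mul (s := univ) (f := fun p : ℝ => r * p)
      (f' := fun _ => r) MeasurableSet.univ
      (fun x _ => ((hasDerivAt_id x).const_mul r).congr_deriv (mul_one r) |>.hasDerivWithinAt)
      ((mul_right_injective₀ hr.ne').injOn) (s.indicator (fun z => g (z / r)))
    rw [himg, setLIntegral_univ, setLIntegral_univ] at hcv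
    have hind : ∀ p : ℝ, s.indicator (fun z => g (z / r)) (r * p)
        = ((fun p : ℝ => r * p) ⁻¹' s).indicator g p := by
      intro p
      by_cases hp : r * p ∈ s
      · rw [indicator_of_mem hp, indicator_of_mem (show p ∈ (fun p : ℝ => r * p) ⁻¹' s from hp),
          mul_div_cancel_left₀ _ hr.ne']
      · rw [indicator_of_notMem hp,
          indicator_of_notMem (show p ∉ (fun p : ℝ => r * p) ⁻¹' s from hp)]
    simp_rw [hind, abs_of_pos hr] at hcv
    rw [lintegral_const_mul' _ _ ENNReal.ofReal_ne_top] at hcv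
    rw [hGdef]
    simp only [hTr]
    rw [withDensity_apply g hsetm, ← lintegral_indicator hsetm, hcv, ← mul_assoc,
      ENNReal.inv_mul_cancel (by simpa using hr) ENNReal.ofReal_ne_top, one_mul]
  -- pointwise value of the inner integral
  have hGLne : Real.Gamma L ≠ 0 := (Real.Gamma_pos_of_pos hL).ne'
  have hGkne : Real.Gamma k ≠ 0 := (Real.Gamma_pos_of_pos hk).ne'
  have hIz : ∀ z : ℝ, z ≠ 0 →
      (∫⁻ r in Ioi (0:ℝ), f r * (ENNReal.ofReal r)⁻¹ * g (z / r) ∂volume) = D z := by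
    intro z hz
    rcases lt_or_gt_of_ne hz with hzneg | hzpos
    · have hptw : ∀ r ∈ Ioi (0:ℝ), f r * (ENNReal.ofReal r)⁻¹ * g (z / r) = 0 := by
        intro r hr
        rw [hgdef, gammaPDF_of_neg (div_neg_of_neg_of_pos hzneg hr), mul_zero]
      rw [setLIntegral_congr_fun measurableSet_Ioi hptw, lintegral_zero, hDdef]
      simp [not_lt.2 hzneg.le]
    · set b := c * z with hbdef
      have hb : 0 < b := mul_pos hc hzpos
      set A := c ^ k * z ^ (k - 1) / (Real.Gamma L * Real.Gamma k) with hAdef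
      have hAnn : 0 ≤ A :=
        div_nonneg (mul_nonneg (Real.rpow_nonneg hc.le _) (Real.rpow_nonneg hzpos.le _))
          (mul_nonneg (Real.Gamma_pos_of_pos hL).le (Real.Gamma_pos_of_pos hk).le)
      have hptw : ∀ r ∈ Ioi (0:ℝ), f r * (ENNReal.ofReal r)⁻¹ * g (z / r)
          = ENNReal.ofReal A
            * ENNReal.ofReal (r ^ (L - k - 1) * Real.exp (-r - b / r)) := by
        intro r hr
        rw [mem_Ioi] at hr
        have hYne : r ^ (k - 1) ≠ 0 := (Real.rpow_pos_of_pos hr _).ne'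
        rw [hfdef, hgdef, gammaPDF_of_nonneg hr.le,
          gammaPDF_of_nonneg (div_pos hzpos hr).le,
          ← ENNReal.ofReal_inv_of_pos hr,
          ← ENNReal.ofReal_mul (by positivity),
          ← ENNReal.ofReal_mul (by positivity),
          ← ENNReal.ofReal_mul hAnn]
        congr 1
        have hexp : Real.exp (-(1 * r)) * Real.exp (-(c * (z / r)))
            = Real.exp (-r - b / r) := by
          rw [← Real.exp_add]
          congr 1
          rw [hbdef]
          ring
        have step : (1:ℝ) ^ L / Real.Gamma L * r ^ (L - 1) * Real.exp (-(1 * r)) * r⁻¹ *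
              (c ^ k / Real.Gamma k * (z / r) ^ (k - 1) * Real.exp (-(c * (z / r))))
            = (1 / Real.Gamma L * r ^ (L - 1)) * r⁻¹ *
              (c ^ k / Real.Gamma k * (z ^ (k - 1) / r ^ (k - 1)))
              * Real.exp (-r - b / r) := by
          rw [← hexp, Real.one_rpow, Real.div_rpow hzpos.le hr.le]
          ring
        rw [step]
        have hrpow : r ^ (L - k - 1) = r ^ (L - 1) * r⁻¹ * (r ^ (k - 1))⁻¹ := by
          rw [← Real.rpow_neg_one r, ← Real.rpow_neg hr.le, ← Real.rpow_add hr,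
            ← Real.rpow_add hr]
          congr 1
          ring
        rw [hrpow, hAdef]
        field_simp
      rw [setLIntegral_congr_fun measurableSet_Ioi hptw,
        lintegral_const_mul' _ _ ENNReal.ofReal_ne_top, key_integral (L - k) hb,
        ← ENNReal.ofReal_mul hAnn, hDdef]
      simp only [if_pos hzpos]
      congr 1
      have hcz : k * z / γbarI = c * z := by rw [hcdef]; ring
      have h2 : c ^ ((L + k) / 2) = c ^ k * c ^ ((L - k) / 2) := by
        rw [← Real.rpow_add hc]
        congr 1
        ring
      have h3 : z ^ ((L + k) / 2 - 1) = z ^ (k - 1) * z ^ ((L - k) / 2) := by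
        rw [← Real.rpow_add hzpos]
        congr 1
        ring
      rw [fcDensity, hcz, ← hcdef, ← hbdef, h2, h3, hAdef, hbdef,
        Real.mul_rpow hc.le hzpos.le, ← hbdef]
      ring
  -- rewrite integrand as a double integral
  have hconst_ne : ∀ z : ℝ, s.indicator (fun _ => (1:ℝ≥0∞)) z ≠ ⊤ := by
    intro z; by_cases hzs : z ∈ s <;> simp [hzs]
  have hH : ∫⁻ r in Ioi (0:ℝ), (f * G) r ∂volume
      = ∫⁻ r in Ioi (0:ℝ), ∫⁻ z, s.indicator (fun _ => (1:ℝ≥0∞)) z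
          * (f r * (ENNReal.ofReal r)⁻¹ * g (z / r)) ∂volume ∂volume := by
    refine setLIntegral_congr_fun measurableSet_Ioi (fun r hr => ?_)
    rw [mem_Ioi] at hr
    have hfrne : f r * (ENNReal.ofReal r)⁻¹ ≠ ⊤ :=
      ENNReal.mul_ne_top ENNReal.ofReal_ne_top
        (ENNReal.inv_ne_top.2 (by simpa using hr))
    rw [Pi.mul_apply, hinner r hr, ← mul_assoc, ← lintegral_const_mul' _ _ hfrne]
    refine lintegral_congr fun z => ?_
    by_cases hzs : z ∈ s
    · rw [indicator_of_mem hzs, indicator_of_mem hzs, one_mul, mul_assoc]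
    · rw [indicator_of_notMem hzs, indicator_of_notMem hzs, mul_zero, zero_mul]
  rw [hH]
  have hmeasu : Measurable (Function.uncurry fun r z : ℝ =>
      s.indicator (fun _ => (1:ℝ≥0∞)) z * (f r * (ENNReal.ofReal r)⁻¹ * g (z / r))) := by
    exact ((measurable_one.indicator hs).comp measurable_snd).mul
      (((hfm.comp measurable_fst).mul
        ((ENNReal.measurable_ofReal.comp measurable_fst).inv)).mul
        (hgm.comp (measurable_snd.div measurable_fst)))
  rw [lintegral_lintegral_swap hmeasu.aemeasurable]
  rw [withDensity_apply _ hs, ← lintegral_indicator hs]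
  refine lintegral_congr_ae ?_
  filter_upwards [hzero_ae] with z hz
  rw [lintegral_const_mul' _ _ (hconst_ne z), hIz z hz]
  by_cases hzs : z ∈ s
  · rw [indicator_of_mem hzs, indicator_of_mem hzs, one_mul]
  · rw [indicator_of_notMem hzs, indicator_of_notMem hzs, zero_mul]
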